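/- arXiv:1903.11356 — 4 statements merged into one kernel-verified Lean document; each statement's English description precedes it below -/
import Mathlib

section
/- Let E be a complex inner product space with inner product ⟪·,·⟫ conjugate-linear in the first argument, and let z, w ∈ E be unit vectors. Define d_F = inf_{a∈ℂ} ‖a·z − w‖, d_P = inf_{θ∈ℝ} ‖exp(iθ)·z − w‖, and ρ = arccos(|⟪z,w⟫|). Then the three distances are related by d_P² = 2 − 2·√(1 − d_F²), d_F = sin ρ, and d_P = 2·sin(ρ/2). -/
/-!
Since `‖z‖ = 1`, `a • z - w` is the orthogonal sum of `(a - ⟪z, w⟫) • z` and `⟪z, w⟫ • z - w`, so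
`‖a • z - w‖² = ‖a - ⟪z, w⟫‖² + ‖w‖² - ‖⟪z, w⟫‖²`. Minimising `‖a - ⟪z, w⟫‖` over all of `ℂ` gives `0`,
over the unit circle it gives `1 - ‖⟪z, w⟫‖`; hence `d_F = √(1 - r²)` and `d_P = √(2 - 2r)` with
`r = ‖⟪z, w⟫‖ = cos ρ`, and the trigonometric forms follow from `sin ρ = √(1 - cos² ρ)` and
`sin² (ρ/2) = (1 - cos ρ) / 2`.
-/

open Complex

theorem Real.ciInf_eq_sqrt_of_forall_le_sq {ι : Type*} {f : ι → ℝ} {b : ℝ} (hf : ∀ i, 0 ≤ f i)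
    (hle : ∀ i, b ≤ f i ^ 2) (i₀ : ι) (heq : f i₀ ^ 2 = b) : ⨅ i, f i = √b :=
  IsLeast.csInf_eq
    ⟨⟨i₀, by rw [← heq, Real.sqrt_sq (hf i₀)]⟩, by
      rintro _ ⟨i, rfl⟩
      simpa only [Real.sqrt_sq (hf i)] using Real.sqrt_le_sqrt (hle i)⟩

section Projection

variable {𝕜 E : Type*} [RCLike 𝕜] [SeminormedAddCommGroup E] [InnerProductSpace 𝕜 E]
  {z : E} (w : E)

theorem norm_smul_sub_sq_of_norm_eq_one (hz : ‖z‖ = 1) (a : 𝕜) :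
    ‖a • z - w‖ ^ 2 = ‖a - inner 𝕜 z w‖ ^ 2 + (‖w‖ ^ 2 - ‖inner 𝕜 z w‖ ^ 2) := by
  have hE := norm_sub_sq (𝕜 := 𝕜) (a • z) w
  have h𝕜 := norm_sub_sq (𝕜 := 𝕜) a (inner 𝕜 z w)
  rw [inner_smul_left, norm_smul, hz, mul_one] at hE
  rw [RCLike.inner_apply] at h𝕜
  rw [hE, h𝕜, mul_comm (inner 𝕜 z w)]
  ring

theorem iInf_norm_smul_sub_of_norm_eq_one (hz : ‖z‖ = 1) :
    ⨅ a : 𝕜, ‖a • z - w‖ = √(‖w‖ ^ 2 - ‖inner 𝕜 z w‖ ^ 2) :=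
  Real.ciInf_eq_sqrt_of_forall_le_sq (fun _ ↦ norm_nonneg _)
    (fun a ↦ by rw [norm_smul_sub_sq_of_norm_eq_one w hz]; linarith [sq_nonneg ‖a - inner 𝕜 z w‖])
    (inner 𝕜 z w) (by rw [norm_smul_sub_sq_of_norm_eq_one w hz, sub_self, norm_zero]; ring)

end Projection

theorem Complex.norm_exp_arg_mul_I_sub_self (c : ℂ) :
    ‖exp (c.arg * I) - c‖ = |1 - ‖c‖| := by
  have hpolar : exp (c.arg * I) - c = ((1 - ‖c‖ : ℝ) : ℂ) * exp (c.arg * I) := by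
    nth_rewrite 2 [← norm_mul_exp_arg_mul_I c]
    push_cast
    ring
  rw [hpolar, norm_mul, norm_exp_ofReal_mul_I, mul_one, norm_real, Real.norm_eq_abs]

theorem iInf_norm_exp_mul_I_smul_sub {E : Type*} [SeminormedAddCommGroup E] [InnerProductSpace ℂ E]
    {z : E} (w : E) (hz : ‖z‖ = 1) :
    ⨅ θ : ℝ, ‖exp (θ * I) • z - w‖ = √(1 + ‖w‖ ^ 2 - 2 * ‖inner ℂ z w‖) := by
  set c := inner ℂ z w
  have hsq : ∀ θ : ℝ, ‖exp (θ * I) • z - w‖ ^ 2 = ‖exp (θ * I) - c‖ ^ 2 + (‖w‖ ^ 2 - ‖c‖ ^ 2) :=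
    fun θ ↦ norm_smul_sub_sq_of_norm_eq_one w hz _
  refine Real.ciInf_eq_sqrt_of_forall_le_sq (fun _ ↦ norm_nonneg _) (fun θ ↦ ?_) c.arg ?_
  · have hcircle : |1 - ‖c‖| ≤ ‖exp (θ * I) - c‖ := by
      simpa only [norm_exp_ofReal_mul_I] using abs_norm_sub_norm_le (exp (θ * I)) c
    rw [hsq]
    nlinarith [sq_abs (1 - ‖c‖), abs_nonneg (1 - ‖c‖)]
  · rw [hsq, norm_exp_arg_mul_I_sub_self, sq_abs]
    ring

theorem Real.two_mul_sin_arccos_div_two {r : ℝ} (hr₀ : -1 ≤ r) (hr₁ : r ≤ 1) :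
    2 * sin (arccos r / 2) = √(2 - 2 * r) := by
  rw [sin_half_eq_sqrt (arccos_nonneg r) (by linarith [arccos_le_pi r, pi_pos]),
    cos_arccos hr₀ hr₁, show 2 - 2 * r = 2 ^ 2 * ((1 - r) / 2) by ring,
    Real.sqrt_mul (by norm_num), Real.sqrt_sq (by norm_num)]

/-- For unit vectors `z, w`, with `d_F = inf_a ‖a•z - w‖`,
`d_P = inf_θ ‖exp(iθ)•z - w‖` and `ρ = arccos |⟪z,w⟫|`, one has
`d_P² = 2 - 2√(1 - d_F²)`, `d_F = sin ρ` and `d_P = 2 sin (ρ/2)`. -/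
theorem procrustes_distance_relations {E : Type*} [NormedAddCommGroup E]
    [InnerProductSpace ℂ E] (z w : E) (hz : ‖z‖ = 1) (hw : ‖w‖ = 1) :
    (⨅ θ : ℝ, ‖Complex.exp ((θ : ℂ) * Complex.I) • z - w‖) ^ 2
        = 2 - 2 * Real.sqrt (1 - (⨅ a : ℂ, ‖a • z - w‖) ^ 2) ∧
    (⨅ a : ℂ, ‖a • z - w‖)
        = Real.sin (Real.arccos (‖(inner ℂ z w : ℂ)‖)) ∧
    (⨅ θ : ℝ, ‖Complex.exp ((θ : ℂ) * Complex.I) • z - w‖)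
        = 2 * Real.sin (Real.arccos (‖(inner ℂ z w : ℂ)‖) / 2) := by
  have hr₁ : ‖inner ℂ z w‖ ≤ 1 := by
    simpa only [hz, hw, mul_one] using norm_inner_le_norm (𝕜 := ℂ) z w
  have hdF : ⨅ a : ℂ, ‖a • z - w‖ = √(1 - ‖inner ℂ z w‖ ^ 2) := by
    rw [iInf_norm_smul_sub_of_norm_eq_one w hz, hw, one_pow]
  have hdP : ⨅ θ : ℝ, ‖exp (θ * I) • z - w‖ = √(2 - 2 * ‖inner ℂ z w‖) := by
    rw [iInf_norm_exp_mul_I_smul_sub w hz, hw, one_pow, one_add_one_eq_two]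
  have hr₀ : 0 ≤ ‖inner ℂ z w‖ := norm_nonneg _
  generalize ‖inner ℂ z w‖ = r at hr₀ hr₁ hdF hdP ⊢
  refine ⟨?_, ?_, ?_⟩
  · rw [hdP, hdF, Real.sq_sqrt (by linarith), Real.sq_sqrt (by nlinarith), sub_sub_cancel,
      Real.sqrt_sq hr₀]
  · rw [hdF, Real.sin_arccos]
  · rw [hdP, Real.two_mul_sin_arccos_div_two (by linarith) hr₁]
end

section
/- (2DKSD simple formulation.) Let E be a finite-dimensional complex inner product space with inner product ⟪·,·⟫ conjugate-linear in the first argument, let u ∈ E, let K, J, N₀ be positive integers, and let z₁,…,z_K ∈ E be unit vectors with ⟪u,z_k⟫ = 0 for all k. For a dictionary D = (d₁,…,d_J) of vectors of E and weights α ∈ ℂ^J write Dα = ∑_{j=1}^J α[j]·d_j, and call D admissible if each d_j is a unit vector with ⟪u,d_j⟫ = 0, and α sparse if α has at most N₀ nonzero coefficients. Then the infimum, over all admissible D and all sparse α₁,…,α_K with Dα_k ≠ 0 for every k, of ∑_{k=1}^K (1 − |⟪Dα_k/‖Dα_k‖, z_k⟫|²) equals the infimum, over all admissible D and all sparse α₁,…,α_K,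 of ∑_{k=1}^K ‖z_k − Dα_k‖². -/
/-! For a unit vector `w`, `‖z - a • w‖² = ‖z‖² - |⟪w, z⟫|² + |⟪w, z⟫ - a|²`: among the multiples
of `w`, the least-squares error is minimal exactly at the projection `⟪w, z⟫ • w`, where it equals
the full Procrustes distance `1 - |⟪w, z⟫|²` when `‖z‖ = 1`. Hence rescaling each `αₖ` turns every
Procrustes value into a least-squares value, while every least-squares value dominates the
Procrustes value of the same weights, or, when `Dαₖ = 0`, that of a single atom (at most
`1 = ‖zₖ - 0‖²`). -/

section

variable {E : Type*} [NormedAddCommGroup E] [InnerProductSpace ℂ E]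

theorem norm_sub_smul_sq_of_norm_eq_one {w : E} (hw : ‖w‖ = 1) (z : E) (a : ℂ) :
    ‖z - a • w‖ ^ 2 = ‖z‖ ^ 2 - ‖(inner ℂ w z : ℂ)‖ ^ 2 + ‖inner ℂ w z - a‖ ^ 2 := by
  rw [@norm_sub_sq ℂ, norm_smul, hw, inner_smul_right, ← inner_conj_symm w z,
    Complex.sq_norm (_ - a), Complex.normSq_sub, ← Complex.sq_norm, ← Complex.sq_norm]
  simp only [RCLike.re_to_complex, Complex.mul_re, Complex.conj_re, Complex.conj_im]
  ring

theorem one_sub_norm_inner_normalize_sq_le {z v : E} (hz : ‖z‖ = 1) (hv : v ≠ 0) :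
    1 - ‖(inner ℂ ((‖v‖ : ℂ)⁻¹ • v) z : ℂ)‖ ^ 2 ≤ ‖z - v‖ ^ 2 := by
  set w := (‖v‖ : ℂ)⁻¹ • v
  have hw : ‖w‖ = 1 := norm_smul_inv_norm hv
  have hv' : (‖v‖ : ℂ) ≠ 0 := by exact_mod_cast norm_ne_zero_iff.mpr hv
  calc 1 - ‖(inner ℂ w z : ℂ)‖ ^ 2
      ≤ 1 - ‖(inner ℂ w z : ℂ)‖ ^ 2 + ‖inner ℂ w z - ‖v‖‖ ^ 2 :=
        le_add_of_nonneg_right (sq_nonneg _)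
    _ = ‖z - (‖v‖ : ℂ) • w‖ ^ 2 := by
        rw [norm_sub_smul_sq_of_norm_eq_one hw, hz, one_pow]
    _ = ‖z - v‖ ^ 2 := by rw [smul_inv_smul₀ hv']

variable {ι : Type*} [Fintype ι]

theorem exists_ncard_support_le_norm_sub_sum_smul_sq_eq {z : E} (hz : ‖z‖ = 1) {d : ι → E}
    {α : ι → ℂ} (hv : ∑ j, α j • d j ≠ 0) :
    ∃ β : ι → ℂ, Set.ncard {j | β j ≠ 0} ≤ Set.ncard {j | α j ≠ 0} ∧
      ‖z - ∑ j, β j • d j‖ ^ 2 = 1 - ‖(inner ℂ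
        ((‖∑ j, α j • d j‖ : ℂ)⁻¹ • ∑ j, α j • d j) z : ℂ)‖ ^ 2 := by
  set v := ∑ j, α j • d j
  set c : ℂ := inner ℂ ((‖v‖ : ℂ)⁻¹ • v) z
  have hw : ‖(‖v‖ : ℂ)⁻¹ • v‖ = 1 := norm_smul_inv_norm hv
  refine ⟨(c * (‖v‖ : ℂ)⁻¹) • α,
    Set.ncard_le_ncard (fun j hj => right_ne_zero_of_mul hj) (Set.toFinite _), ?_⟩
  have hsum : ∑ j, ((c * (‖v‖ : ℂ)⁻¹) • α) j • d j = c • (‖v‖ : ℂ)⁻¹ • v := by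
    simp only [Pi.smul_apply, smul_eq_mul, mul_smul, v, Finset.smul_sum]
  rw [hsum, norm_sub_smul_sq_of_norm_eq_one hw, hz, one_pow, sub_self,
    norm_zero]
  ring

theorem exists_ncard_support_le_sum_smul_ne_zero {z : E} (hz : ‖z‖ = 1) {d : ι → E} {j₀ : ι}
    (hd : d j₀ ≠ 0) {N : ℕ} (hN : 0 < N) {α : ι → ℂ} (hα : Set.ncard {j | α j ≠ 0} ≤ N) :
    ∃ β : ι → ℂ, Set.ncard {j | β j ≠ 0} ≤ N ∧ ∑ j, β j • d j ≠ 0 ∧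
      1 - ‖(inner ℂ ((‖∑ j, β j • d j‖ : ℂ)⁻¹ • ∑ j, β j • d j) z : ℂ)‖ ^ 2
        ≤ ‖z - ∑ j, α j • d j‖ ^ 2 := by
  classical
  by_cases hv : ∑ j, α j • d j = 0
  · have hsingle : ∑ j, (Pi.single j₀ 1 : ι → ℂ) j • d j = d j₀ := by simp
    refine ⟨Pi.single j₀ (1 : ℂ), ?_, hsingle ▸ hd, ?_⟩
    · rw [← Function.support, Pi.support_single_of_ne one_ne_zero, Set.ncard_singleton]
      exact hN
    · rw [hv, sub_zero, hz, one_pow]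
      exact sub_le_self _ (sq_nonneg _)
  · exact ⟨α, hα, hv, one_sub_norm_inner_normalize_sq_le hz hv⟩

end

theorem csInf_eq_csInf_of_subset_of_forall_exists_le {α : Type*} [ConditionallyCompleteLattice α]
    {A B : Set α} (hB : BddBelow B) (hAB : A ⊆ B) (hBA : ∀ b ∈ B, ∃ a ∈ A, a ≤ b) :
    sInf A = sInf B := by
  rcases B.eq_empty_or_nonempty with rfl | hBne
  · rw [Set.subset_empty_iff.mp hAB]
  obtain ⟨b, hb⟩ := hBne
  obtain ⟨a, ha, -⟩ := hBA b hb
  refine le_antisymm (le_csInf ⟨b, hb⟩ fun b hb => ?_) (csInf_le_csInf hB ⟨a, ha⟩ hAB)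
  obtain ⟨a, ha, hab⟩ := hBA b hb
  exact (csInf_le (hB.mono hAB) ha).trans hab

theorem two_dksd_simple_formulation_general {E : Type*} [NormedAddCommGroup E]
    [InnerProductSpace ℂ E] (u : E)
    (K J N₀ : ℕ) (hJ : 0 < J) (hN₀ : 0 < N₀)
    (z : Fin K → E) (hz : ∀ k, ‖z k‖ = 1) :
    sInf {s : ℝ | ∃ (d : Fin J → E) (α : Fin K → Fin J → ℂ),
        (∀ j, ‖d j‖ = 1 ∧ (inner ℂ u (d j) : ℂ) = 0) ∧
        (∀ k, Set.ncard {j | α k j ≠ 0} ≤ N₀) ∧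
        (∀ k, (∑ j, α k j • d j) ≠ 0) ∧
        s = ∑ k, (1 - ‖
          (inner ℂ ((‖∑ j, α k j • d j‖ : ℂ)⁻¹ • ∑ j, α k j • d j) (z k) : ℂ)‖ ^ 2)}
      = sInf {s : ℝ | ∃ (d : Fin J → E) (α : Fin K → Fin J → ℂ),
        (∀ j, ‖d j‖ = 1 ∧ (inner ℂ u (d j) : ℂ) = 0) ∧
        (∀ k, Set.ncard {j | α k j ≠ 0} ≤ N₀) ∧
        s = ∑ k, ‖z k - ∑ j, α k j • d j‖ ^ 2} := by
  refine csInf_eq_csInf_of_subset_of_forall_exists_le ⟨0, ?_⟩ ?_ ?_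
  · rintro s ⟨d, α, -, -, rfl⟩
    positivity
  · rintro s ⟨d, α, hd, hα, hv, rfl⟩
    choose β hβα hβ using fun k => exists_ncard_support_le_norm_sub_sum_smul_sq_eq (hz k) (hv k)
    exact ⟨d, β, hd, fun k => (hβα k).trans (hα k), Finset.sum_congr rfl fun k _ => (hβ k).symm⟩
  · rintro s ⟨d, α, hd, hα, rfl⟩
    have hd₀ : d ⟨0, hJ⟩ ≠ 0 := norm_ne_zero_iff.mp ((hd _).1 ▸ one_ne_zero)
    choose β hβ hβv hβle using fun k =>
      exists_ncard_support_le_sum_smul_ne_zero (hz k) hd₀ hN₀ (hα k)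
    exact ⟨_, ⟨d, β, hd, hβ, hβv, rfl⟩, Finset.sum_le_sum fun k _ => hβle k⟩

/-- 2DKSD simple formulation: for pre-shape data `z₁,…,z_K` (unit vectors
orthogonal to the shift vector `u`), the infimum of the summed squared full Procrustes
distances `∑ₖ (1 - |⟪Dαₖ/‖Dαₖ‖, zₖ⟫|²)` over admissible dictionaries and `N₀`-sparse
complex weights with `Dαₖ ≠ 0` equals the infimum of `∑ₖ ‖zₖ - Dαₖ‖²` over admissible
dictionaries and `N₀`-sparse complex weights. -/
theorem two_dksd_simple_formulation {E : Type*} [NormedAddCommGroup E]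
    [InnerProductSpace ℂ E] [FiniteDimensional ℂ E] (u : E)
    (K J N₀ : ℕ) (hK : 0 < K) (hJ : 0 < J) (hN₀ : 0 < N₀)
    (z : Fin K → E) (hz : ∀ k, ‖z k‖ = 1) (huz : ∀ k, (inner ℂ u (z k) : ℂ) = 0) :
    sInf {s : ℝ | ∃ (d : Fin J → E) (α : Fin K → Fin J → ℂ),
        (∀ j, ‖d j‖ = 1 ∧ (inner ℂ u (d j) : ℂ) = 0) ∧
        (∀ k, Set.ncard {j | α k j ≠ 0} ≤ N₀) ∧
        (∀ k, (∑ j, α k j • d j) ≠ 0) ∧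
        s = ∑ k, (1 - ‖
          (inner ℂ ((‖∑ j, α k j • d j‖ : ℂ)⁻¹ • ∑ j, α k j • d j) (z k) : ℂ)‖ ^ 2)}
      = sInf {s : ℝ | ∃ (d : Fin J → E) (α : Fin K → Fin J → ℂ),
        (∀ j, ‖d j‖ = 1 ∧ (inner ℂ u (d j) : ℂ) = 0) ∧
        (∀ k, Set.ncard {j | α k j ≠ 0} ≤ N₀) ∧
        s = ∑ k, ‖z k - ∑ j, α k j • d j‖ ^ 2} :=
  two_dksd_simple_formulation_general u K J N₀ hJ hN₀ z hz
end

section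
/- Let E be a complex inner product space with inner product ⟪·,·⟫ conjugate-linear in the first argument, let d₁,…,d_J ∈ E, z ∈ E, and N₀ a positive integer; write Dα = ∑_{j=1}^J α[j]·d_j for α ∈ ℂ^J. Suppose α̂ ∈ ℂ^J has at most N₀ nonzero coefficients and minimizes α ↦ ‖z − Dα‖ over all α ∈ ℂ^J with at most N₀ nonzero coefficients. Then ⟪Dα̂, z⟫ = ‖Dα̂‖²; equivalently, if Dα̂ ≠ 0, the orthogonal projection of z onto the complex line ℂ·(Dα̂) is exactly Dα̂. -/
/-!
Rescaling a weight vector does not enlarge its support, so `Dα̂` is also a best approximation of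
`z` from the line `ℂ ∙ Dα̂`. The residual `z - Dα̂` is then orthogonal to that line, which is
`⟪Dα̂, z⟫ = ⟪Dα̂, Dα̂⟫`.
-/

open Function

theorem inner_eq_norm_sq_of_forall_norm_sub_le_norm_sub_smul {𝕜 E : Type*} [RCLike 𝕜]
    [NormedAddCommGroup E] [InnerProductSpace 𝕜 E] {v z : E}
    (h : ∀ c : 𝕜, ‖z - v‖ ≤ ‖z - c • v‖) :
    inner 𝕜 v z = (‖v‖ : 𝕜) ^ 2 := by
  let K := 𝕜 ∙ v
  have hv : v ∈ K := Submodule.mem_span_singleton_self v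
  have hmin : ‖z - v‖ = ⨅ w : K, ‖z - w‖ := by
    have hbdd : BddBelow (Set.range fun w : K => ‖z - w‖) :=
      ⟨0, by rintro _ ⟨w, rfl⟩; exact norm_nonneg _⟩
    refine le_antisymm (le_ciInf fun ⟨w, hw⟩ => ?_) (ciInf_le hbdd ⟨v, hv⟩)
    obtain ⟨c, rfl⟩ := Submodule.mem_span_singleton.mp hw
    exact h c
  have hperp : inner 𝕜 (z - v) v = 0 := (K.norm_eq_iInf_iff_inner_eq_zero hv).mp hmin v hv
  rw [← inner_self_eq_norm_sq_to_K, ← sub_eq_zero, ← inner_sub_right, ← inner_conj_symm,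
    hperp, map_zero]

theorem Set.ncard_support_smul_le {ι R M : Type*} [Finite ι] [Zero M] [SMulZeroClass R M]
    (c : R) (α : ι → M) : (support (c • α)).ncard ≤ (support α).ncard :=
  Set.ncard_le_ncard (support_const_smul_subset c α)

theorem sparse_minimizer_projection_general {E : Type*} [NormedAddCommGroup E]
    [InnerProductSpace ℂ E] (J N₀ : ℕ)
    (d : Fin J → E) (z : E) (αhat : Fin J → ℂ)
    (hsparse : Set.ncard {j | αhat j ≠ 0} ≤ N₀)
    (hmin : ∀ α : Fin J → ℂ, Set.ncard {j | α j ≠ 0} ≤ N₀ →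
      ‖z - ∑ j, αhat j • d j‖ ≤ ‖z - ∑ j, α j • d j‖) :
    (inner ℂ (∑ j, αhat j • d j) z : ℂ) = (‖∑ j, αhat j • d j‖ : ℂ) ^ 2 := by
  refine inner_eq_norm_sq_of_forall_norm_sub_le_norm_sub_smul fun c => ?_
  have hscaled := hmin (c • αhat) ((Set.ncard_support_smul_le c αhat).trans hsparse)
  simpa only [Pi.smul_apply, smul_eq_mul, mul_smul, ← Finset.smul_sum] using hscaled

/-- If `α̂` is `N₀`-sparse and minimizes `α ↦ ‖z - Dα‖` over `N₀`-sparse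
complex weight vectors, then `⟪Dα̂, z⟫ = ‖Dα̂‖²`. -/
theorem sparse_minimizer_projection {E : Type*} [NormedAddCommGroup E]
    [InnerProductSpace ℂ E] (J N₀ : ℕ) (hN₀ : 0 < N₀)
    (d : Fin J → E) (z : E) (αhat : Fin J → ℂ)
    (hsparse : Set.ncard {j | αhat j ≠ 0} ≤ N₀)
    (hmin : ∀ α : Fin J → ℂ, Set.ncard {j | α j ≠ 0} ≤ N₀ →
      ‖z - ∑ j, αhat j • d j‖ ≤ ‖z - ∑ j, α j • d j‖) :
    (inner ℂ (∑ j, αhat j • d j) z : ℂ) = (‖∑ j, αhat j • d j‖ : ℂ) ^ 2 :=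
  sparse_minimizer_projection_general J N₀ d z αhat hsparse hmin
end

section
/- Let E be a complex inner product space with inner product ⟪·,·⟫ conjugate-linear in the first argument, let d₁,…,d_J ∈ E, let z ∈ E be a unit vector, and let N₀ be a positive integer; write Dα = ∑_{j=1}^J α[j]·d_j. Suppose α̂ ∈ ℂ^J has at most N₀ nonzero coefficients, minimizes α ↦ ‖z − Dα‖ over all α with at most N₀ nonzero coefficients, and satisfies Dα̂ ≠ 0. Then for every α ∈ ℂ^J with at most N₀ nonzero coefficients and Dα ≠ 0, one has 1 − |⟪Dα̂/‖Dα̂‖, z⟫|² ≤ 1 − |⟪Dα/‖Dα‖, z⟫|²; i.e., α̂ also minimizes the squared full Procrustes distance between the shape of z and the shape of the normalized reconstruction Dα/‖Dα‖. -/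
/-!
The squared distance from `z` to the line `ℂ ∙ w` is attained at the orthogonal projection of `z`
and equals `‖z‖² - |⟪w / ‖w‖, z⟫|²` by Pythagoras. Hence `1 - |⟪Dα̂ / ‖Dα̂‖, z⟫|² ≤ ‖z - Dα̂‖²`.
Conversely, the projection of `z` onto `ℂ ∙ Dα` is `c • Dα = D (c • α)` for some `c`, and `c • α`
is as sparse as `α`, so minimality of `α̂` bounds `‖z - Dα̂‖²` by `1 - |⟪Dα / ‖Dα‖, z⟫|²`.
-/

open Submodule

section ProjectionOntoLine

variable {𝕜 E : Type*} [RCLike 𝕜] [NormedAddCommGroup E] [InnerProductSpace 𝕜 E]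

theorem Submodule.norm_sub_starProjection_le {K : Submodule 𝕜 E} [K.HasOrthogonalProjection]
    {x : E} (hx : x ∈ K) (y : E) : ‖y - K.starProjection y‖ ≤ ‖y - x‖ := by
  rw [starProjection_minimal]
  exact ciInf_le ⟨0, Set.forall_mem_range.mpr fun _ => norm_nonneg _⟩ (⟨x, hx⟩ : K)

theorem sq_norm_sub_starProjection_span_singleton (w z : E) :
    ‖z - (𝕜 ∙ w).starProjection z‖ ^ 2 = ‖z‖ ^ 2 - ‖inner 𝕜 ((‖w‖ : 𝕜)⁻¹ • w) z‖ ^ 2 := by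
  rcases eq_or_ne w 0 with rfl | hw
  · simp
  set u : E := (‖w‖ : 𝕜)⁻¹ • w
  have hu : ‖u‖ = 1 := norm_smul_inv_norm hw
  have hP : (𝕜 ∙ w).starProjection z = inner 𝕜 u z • u := by
    rw [starProjection_singleton, inner_smul_left, smul_smul]
    congr 1
    simp only [map_inv₀, RCLike.conj_ofReal, RCLike.ofReal_pow]
    field_simp
  have hpyth := norm_sq_eq_add_norm_sq_starProjection z (𝕜 ∙ u)
  rw [starProjection_orthogonal_val, starProjection_unit_singleton 𝕜 hu, norm_smul, hu,
    mul_one] at hpyth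
  rw [hP]
  linarith

theorem sq_norm_sub_sq_inner_normalize_le (w z : E) (c : 𝕜) :
    ‖z‖ ^ 2 - ‖inner 𝕜 ((‖w‖ : 𝕜)⁻¹ • w) z‖ ^ 2 ≤ ‖z - c • w‖ ^ 2 := by
  rw [← sq_norm_sub_starProjection_span_singleton]
  gcongr
  exact norm_sub_starProjection_le (smul_mem _ c (mem_span_singleton_self w)) z

end ProjectionOntoLine

theorem sparse_minimizer_shape_distance_general {E : Type*} [NormedAddCommGroup E]
    [InnerProductSpace ℂ E] (J N₀ : ℕ)
    (d : Fin J → E) (z : E) (hz : ‖z‖ = 1) (αhat : Fin J → ℂ)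
    (hmin : ∀ α : Fin J → ℂ, Set.ncard {j | α j ≠ 0} ≤ N₀ →
      ‖z - ∑ j, αhat j • d j‖ ≤ ‖z - ∑ j, α j • d j‖) :
    ∀ α : Fin J → ℂ, Set.ncard {j | α j ≠ 0} ≤ N₀ → (∑ j, α j • d j) ≠ 0 →
      1 - ‖(inner ℂ ((‖∑ j, αhat j • d j‖ : ℂ)⁻¹ • ∑ j, αhat j • d j) z : ℂ)‖ ^ 2
        ≤ 1 - ‖(inner ℂ ((‖∑ j, α j • d j‖ : ℂ)⁻¹ • ∑ j, α j • d j) z : ℂ)‖ ^ 2 := by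
  intro α hα _
  obtain ⟨c, hc⟩ := mem_span_singleton.mp ((ℂ ∙ ∑ j, α j • d j).starProjection_apply_mem z)
  have hscale : ∑ j, (c • α) j • d j = c • ∑ j, α j • d j := by
    simp only [Pi.smul_apply, smul_eq_mul, Finset.smul_sum, mul_smul]
  have hsparse : Set.ncard {j | (c • α) j ≠ 0} ≤ N₀ :=
    (Set.ncard_le_ncard (Function.support_const_smul_subset c α)).trans hα
  have hbest := hmin (c • α) hsparse
  rw [hscale, hc] at hbest
  rw [show (1 : ℝ) = ‖z‖ ^ 2 by rw [hz, one_pow]]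
  calc _ ≤ ‖z - (1 : ℂ) • ∑ j, αhat j • d j‖ ^ 2 := sq_norm_sub_sq_inner_normalize_le _ _ _
    _ ≤ ‖z - (ℂ ∙ ∑ j, α j • d j).starProjection z‖ ^ 2 := by rw [one_smul]; gcongr
    _ = _ := sq_norm_sub_starProjection_span_singleton _ _

/-- If `α̂` is `N₀`-sparse, minimizes `α ↦ ‖z - Dα‖` over `N₀`-sparse
weights, and `Dα̂ ≠ 0`, then `α̂` also minimizes the squared full Procrustes distance
`1 - |⟪Dα/‖Dα‖, z⟫|²` among `N₀`-sparse weights with `Dα ≠ 0`. -/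
theorem sparse_minimizer_shape_distance {E : Type*} [NormedAddCommGroup E]
    [InnerProductSpace ℂ E] (J N₀ : ℕ) (hN₀ : 0 < N₀)
    (d : Fin J → E) (z : E) (hz : ‖z‖ = 1) (αhat : Fin J → ℂ)
    (hsparse : Set.ncard {j | αhat j ≠ 0} ≤ N₀)
    (hmin : ∀ α : Fin J → ℂ, Set.ncard {j | α j ≠ 0} ≤ N₀ →
      ‖z - ∑ j, αhat j • d j‖ ≤ ‖z - ∑ j, α j • d j‖)
    (hne : (∑ j, αhat j • d j) ≠ 0) :
    ∀ α : Fin J → ℂ, Set.ncard {j | α j ≠ 0} ≤ N₀ → (∑ j, α j • d j) ≠ 0 →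
      1 - ‖(inner ℂ ((‖∑ j, αhat j • d j‖ : ℂ)⁻¹ • ∑ j, αhat j • d j) z : ℂ)‖ ^ 2
        ≤ 1 - ‖(inner ℂ ((‖∑ j, α j • d j‖ : ℂ)⁻¹ • ∑ j, α j • d j) z : ℂ)‖ ^ 2 :=
  sparse_minimizer_shape_distance_general J N₀ d z hz αhat hmin
end
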